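/- Let Γ be a discrete subring of ℂ containing 1, let z ∈ ℂ' and let (a_n)_{n≥0} be a continued fraction expansion of z over Γ with iteration sequence (z_n) and Q-pair (p_n), (q_n). An infinite neat subset for the expansion exists if any one of the following holds: (i) |q_{n−1}| ≤ |q_n| for all n ∈ ℕ; (ii) liminf_{n∈ℕ} |z_{n+1}| > 1; (iii) the expansion is given by a Γ-valued continued fraction algorithm f for which there exists r ∈ (0,1) with |ζ − f(ζ)| < r for all ζ ∈ ℂ. Moreover, if the conditions in (i) and (iii) both hold, then the whole of ℕ is a neat subset. -/

import Mathlib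

/-- The quotient field of a subring `Γ` of `ℂ`, as a subset of `ℂ`. -/
def quotField (Γ : Subring ℂ) : Set ℂ :=
  {x | ∃ p ∈ Γ, ∃ q ∈ Γ, q ≠ 0 ∧ x = p / q}

/-- `(a n)` is a continued fraction expansion of `z` over `Γ`, with iteration
sequence `(zs n)`: `zs 0 = z`, `0 < |zs n - a n| < 1` and `zs (n+1) = (zs n - a n)⁻¹`. -/
def IsCFE (Γ : Subring ℂ) (z : ℂ) (a zs : ℕ → ℂ) : Prop :=
  (∀ n, a n ∈ Γ) ∧ zs 0 = z ∧
    (∀ n, 0 < Norm.norm (zs n - a n) ∧ Norm.norm (zs n - a n) < 1) ∧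
    (∀ n, zs (n + 1) = (zs n - a n)⁻¹)

/-- The Q-pair of a sequence of partial quotients, with indices shifted by one:
`p (n+1)` is the paper's `p_n` and `q (n+1)` is the paper's `q_n`
(so `p 0 = p_{-1} = 1` and `q 0 = q_{-1} = 0`). -/
def IsQPair (a p q : ℕ → ℂ) : Prop :=
  p 0 = 1 ∧ p 1 = a 0 ∧ (∀ n, p (n + 2) = a (n + 1) * p (n + 1) + p n) ∧
  q 0 = 0 ∧ q 1 = 1 ∧ (∀ n, q (n + 2) = a (n + 1) * q (n + 1) + q n)


/-- The sequence of relative errors `δ_n = q_n (q_n z - p_n)` (index shifted by one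
in `p`, `q`, so `relErr z p q n` is the paper's `δ_n`). -/
def relErr (z : ℂ) (p q : ℕ → ℂ) (n : ℕ) : ℂ :=
  q (n + 1) * (q (n + 1) * z - p (n + 1))

/-- `N ⊆ ℕ` is a neat subset for the expansion: `|q_{n-1}| ≤ |q_n|` for all `n ∈ N`
and `liminf_{n ∈ N} |z_{n+1}| > 1` (there is `α > 1` with `|z_{n+1}| ≥ α` for all but
finitely many `n ∈ N`). Indices of `q` are shifted by one, so `q n` is the paper's `q_{n-1}`. -/
def IsNeat (zs q : ℕ → ℂ) (N : Set ℕ) : Prop :=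
  (∀ n ∈ N, Norm.norm (q n) ≤ Norm.norm (q (n + 1))) ∧
  ∃ α : ℝ, 1 < α ∧ {n | n ∈ N ∧ Norm.norm (zs (n + 1)) < α}.Finite

/-!
Under (ii) and (iii) take `N = {n | |q_{n-1}| ≤ |q_n|}`: it is infinite because the `q_n` lie in
the discrete ring `Γ`, whose bounded parts are finite, so their norms cannot decrease forever;
under (iii) moreover `|z_{n+1}| = |z_n - a_n|⁻¹ > r⁻¹` for all `n`.

Under (i) it suffices that `|z_{n+1}|` does not tend to `1`. If it did, so would
`|z_{n+1} - a_{n+1}|`; the `a_n` would eventually lie in a finite set of nonzero elements of `Γ`,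
and by compactness the distance `d_n` from `z_n` to the finite set of corners
`{ξ | |ξ| = 1 = |ξ - a_n|}` would tend to `0`. But `d_n > 0` since `|z_n| > 1`, and `d_n` is
eventually nondecreasing: if `η` is a corner for `z_{n+1} = (z_n - a_n)⁻¹`, then
`|z_n - (a_n + η⁻¹)| ≤ |z_{n+1} - η|`, and `a_n + η⁻¹` is itself a corner for `z_n` because its
norm runs through a finite set and is close to `1`.
-/

open Filter Metric Topology

theorem finite_closedBall_inter_of_discreteTopology {Γ : Subring ℂ} [DiscreteTopology Γ]
    (R : ℝ) : (closedBall (0 : ℂ) R ∩ Γ).Finite :=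
  finite_isBounded_inter_isClosed (isDiscrete_iff_discreteTopology.2 ‹_›) isBounded_closedBall
    (AddSubgroup.isClosed_of_discrete (H := Γ.toAddSubgroup))

theorem one_le_norm_of_discreteTopology {Γ : Subring ℂ} [DiscreteTopology Γ] {γ : ℂ}
    (hγ : γ ∈ Γ) (hγ0 : γ ≠ 0) : 1 ≤ ‖γ‖ := by
  by_contra! hlt
  have hanti : StrictAnti (fun n : ℕ => ‖γ ^ n‖) := by
    simpa only [norm_pow] using pow_right_strictAnti₀ (norm_pos_iff.2 hγ0) hlt
  refine Set.infinite_range_of_injective hanti.injective.of_comp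
    ((finite_closedBall_inter_of_discreteTopology (Γ := Γ) 1).subset ?_)
  rintro _ ⟨n, rfl⟩
  exact ⟨mem_closedBall_zero_iff.2 (by simpa using pow_le_one₀ (norm_nonneg γ) hlt.le),
    pow_mem hγ n⟩

theorem infinite_setOf_norm_le_norm_succ {Γ : Subring ℂ} [DiscreteTopology Γ] {u : ℕ → ℂ}
    (hu : ∀ n, u n ∈ Γ) : {n | ‖u n‖ ≤ ‖u (n + 1)‖}.Infinite := by
  rw [← Nat.frequently_atTop_iff_infinite]
  intro hev
  obtain ⟨M, hM⟩ := eventually_atTop.1 hev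
  have hanti : StrictAnti (fun k => ‖u (M + k)‖) :=
    strictAnti_nat_of_succ_lt fun k => not_le.1 (hM (M + k) (Nat.le_add_right M k))
  refine Set.infinite_range_of_injective hanti.injective.of_comp
    ((finite_closedBall_inter_of_discreteTopology (Γ := Γ) ‖u M‖).subset ?_)
  rintro _ ⟨k, rfl⟩
  exact ⟨mem_closedBall_zero_iff.2 (by simpa using hanti.antitone (Nat.zero_le k)), hu _⟩

theorem finite_sphere_inter_sphere {β : ℂ} (hβ : β ≠ 0) :
    (sphere (0 : ℂ) 1 ∩ sphere β 1).Finite := by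
  open Polynomial in
  let P : ℂ[X] := C (starRingEnd ℂ β) * X ^ 2 - C (β * starRingEnd ℂ β) * X + C β
  have hP : P ≠ 0 := fun h => hβ (by simpa [P] using congrArg (coeff · 0) h)
  refine (finite_setOfPred_isRoot hP).subset fun ξ ⟨h0, hβ⟩ => ?_
  rw [mem_sphere_zero_iff_norm] at h0
  rw [mem_sphere_iff_norm] at hβ
  have h0' : ξ * starRingEnd ℂ ξ = 1 := by
    rw [Complex.mul_conj, Complex.normSq_eq_norm_sq, h0]; simp
  have hβ' : (ξ - β) * (starRingEnd ℂ ξ - starRingEnd ℂ β) = 1 := by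
    rw [← map_sub, Complex.mul_conj, Complex.normSq_eq_norm_sq, hβ]; simp
  simp only [Set.mem_ofPred_eq, IsRoot, P, eval_add, eval_sub, eval_mul, eval_C, eval_pow, eval_X]
  linear_combination (-ξ) * hβ' + (ξ - β) * h0'

theorem eventually_exists_mem_fiber_dist_lt {X Y : Type*} [PseudoMetricSpace X]
    [TopologicalSpace Y] [T2Space Y] {K : Set X} (hK : IsCompact K) {F : X → Y}
    (hF : Continuous F) {u : ℕ → X} {c : Y} (hu : ∀ᶠ n in atTop, u n ∈ K)
    (hFu : Tendsto (F ∘ u) atTop (𝓝 c)) {δ : ℝ} (hδ : 0 < δ) :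
    ∀ᶠ n in atTop, ∃ ξ ∈ K, F ξ = c ∧ dist (u n) ξ < δ := by
  by_contra h
  obtain ⟨φ, hφ, hbad⟩ := extraction_of_frequently_atTop ((not_eventually.1 h).and_eventually hu)
  obtain ⟨ξ, hξK, ψ, hψ, hlim⟩ := hK.tendsto_subseq fun k => (hbad k).2
  have hFξ : F ξ = c :=
    tendsto_nhds_unique ((hF.tendsto ξ).comp hlim) (hFu.comp (hφ.comp hψ).tendsto_atTop)
  obtain ⟨k, hk⟩ := (hlim.eventually (ball_mem_nhds ξ hδ)).exists
  exact (hbad (ψ k)).1 ⟨ξ, hξK, hFξ, hk⟩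

theorem eventually_exists_mem_sphere_inter_dist_lt {Γ : Subring ℂ} [DiscreteTopology Γ]
    {x b : ℕ → ℂ} (hb : ∀ n, b n ∈ Γ) (hx : Tendsto (fun n => ‖x n‖) atTop (𝓝 1))
    (hxb : Tendsto (fun n => ‖x n - b n‖) atTop (𝓝 1)) {R : ℝ} (hbR : ∀ᶠ n in atTop, ‖b n‖ ≤ R)
    {δ : ℝ} (hδ : 0 < δ) :
    ∀ᶠ n in atTop, ∃ ξ ∈ sphere (0 : ℂ) 1 ∩ sphere (b n) 1, dist (x n) ξ < δ := by
  let K : Set (ℂ × ℂ) := closedBall 0 2 ×ˢ (closedBall 0 R ∩ Γ)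
  have hK : IsCompact K :=
    (isCompact_closedBall 0 2).prod (finite_closedBall_inter_of_discreteTopology R).isCompact
  have hxK : ∀ᶠ n in atTop, (x n, b n) ∈ K := by
    filter_upwards [hx.eventually (ge_mem_nhds one_lt_two), hbR] with n hx2 hbn
    exact ⟨mem_closedBall_zero_iff.2 hx2, mem_closedBall_zero_iff.2 hbn, hb n⟩
  have hF : Continuous fun p : ℂ × ℂ => (‖p.1‖, ‖p.1 - p.2‖) := by fun_prop
  filter_upwards [eventually_exists_mem_fiber_dist_lt hK hF hxK (hx.prodMk_nhds hxb)
    (lt_min hδ one_pos)] with n hn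
  obtain ⟨⟨ξ, β⟩, ⟨-, -, hβ⟩, hFξ, hdist⟩ := hn
  rw [Prod.dist_eq, max_lt_iff, lt_min_iff, lt_min_iff] at hdist
  obtain ⟨hξ1, hξβ⟩ := Prod.mk.inj hFξ
  have hbβ : b n = β := by
    by_contra hne
    refine (one_le_norm_of_discreteTopology (sub_mem (hb n) hβ) (sub_ne_zero.2 hne)).not_gt ?_
    simpa [dist_eq_norm] using hdist.2.2
  exact ⟨ξ, ⟨mem_sphere_zero_iff_norm.2 hξ1, hbβ ▸ mem_sphere_iff_norm.2 hξβ⟩, hdist.1.1⟩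

theorem dist_add_inv_le {w β y η : ℂ} (hwy : w - β = y⁻¹) (hy : 1 ≤ ‖y‖) (hη : ‖η‖ = 1) :
    dist w (β + η⁻¹) ≤ dist y η := by
  have hy0 : y ≠ 0 := norm_pos_iff.1 (one_pos.trans_le hy)
  have hη0 : η ≠ 0 := norm_ne_zero_iff.1 (hη ▸ one_ne_zero)
  calc dist w (β + η⁻¹) = dist y⁻¹ η⁻¹ := by
        rw [← hwy, dist_eq_norm, dist_eq_norm, sub_add_eq_sub_sub]
    _ = dist y η / ‖y‖ := by rw [dist_inv_inv₀ hy0 hη0, hη, mul_one]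
    _ ≤ dist y η := div_le_self dist_nonneg hy

theorem Set.Finite.exists_pos_forall_dist_lt_imp_eq {X : Type*} [MetricSpace X] {V : Set X}
    (hV : V.Finite) (c : X) : ∃ ρ > 0, ∀ v ∈ V, dist v c < ρ → v = c := by
  have hopen : (V \ {c})ᶜ ∈ 𝓝 c := (hV.sdiff).isClosed.isOpen_compl.mem_nhds fun h => h.2 rfl
  obtain ⟨ρ, hρ, hball⟩ := Metric.mem_nhds_iff.1 hopen
  exact ⟨ρ, hρ, fun v hv hvc => by_contra fun hne => hball hvc ⟨hv, hne⟩⟩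

theorem infDist_sphere_inter_le_of_sub_eq_inv {w y β β' : ℂ} {ρ : ℝ} (hwy : w - β = y⁻¹)
    (hw : 1 ≤ ‖w‖) (hw' : ‖w‖ < 1 + ρ / 2) (hy : 1 ≤ ‖y‖)
    (hρ : ∀ η ∈ sphere (0 : ℂ) 1 ∩ sphere β' 1, dist ‖β + η⁻¹‖ 1 < ρ → ‖β + η⁻¹‖ = 1)
    (hne : (sphere (0 : ℂ) 1 ∩ sphere β' 1).Nonempty)
    (hd : infDist w (sphere 0 1 ∩ sphere β 1) < ρ / 2) :
    infDist w (sphere 0 1 ∩ sphere β 1) ≤ infDist y (sphere 0 1 ∩ sphere β' 1) := by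
  refine (le_infDist hne).2 fun η hη => ?_
  by_cases hclose : dist y η < ρ / 2
  swap
  · exact hd.le.trans (not_lt.1 hclose)
  have hη1 : ‖η‖ = 1 := mem_sphere_zero_iff_norm.1 hη.1
  have hkey : dist w (β + η⁻¹) ≤ dist y η := dist_add_inv_le hwy hy hη1
  have hξ : ‖β + η⁻¹‖ = 1 := by
    refine hρ η hη ?_
    rw [Real.dist_eq]
    calc |‖β + η⁻¹‖ - 1| ≤ |‖β + η⁻¹‖ - ‖w‖| + |‖w‖ - 1| := abs_sub_le _ _ _
      _ ≤ dist w (β + η⁻¹) + (‖w‖ - 1) := by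
        rw [abs_of_nonneg (sub_nonneg.2 hw), abs_sub_comm, dist_eq_norm]
        gcongr
        exact abs_norm_sub_norm_le _ _
      _ < ρ := by linarith
  have hξβ : ‖β + η⁻¹ - β‖ = 1 := by rw [add_sub_cancel_left, norm_inv, hη1, inv_one]
  exact (infDist_le_dist_of_mem (s := sphere 0 1 ∩ sphere β 1)
    ⟨mem_sphere_zero_iff_norm.2 hξ, mem_sphere_iff_norm.2 hξβ⟩).trans hkey

theorem exists_pos_norm_add_inv_eq_one_of_dist_lt (Γ : Subring ℂ) [DiscreteTopology Γ]
    (R : ℝ) : ∃ ρ > 0, ∀ β ∈ (closedBall (0 : ℂ) R ∩ Γ) \ {0},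
      ∀ β' ∈ (closedBall (0 : ℂ) R ∩ Γ) \ {0}, ∀ η ∈ sphere (0 : ℂ) 1 ∩ sphere β' 1,
        dist ‖β + η⁻¹‖ 1 < ρ → ‖β + η⁻¹‖ = 1 := by
  set S : Set ℂ := (closedBall 0 R ∩ Γ) \ {0}
  have hS : S.Finite := (finite_closedBall_inter_of_discreteTopology R).sdiff
  have hE : (⋃ β ∈ S, sphere (0 : ℂ) 1 ∩ sphere β 1).Finite :=
    hS.biUnion fun β hβ => finite_sphere_inter_sphere hβ.2
  obtain ⟨ρ, hρ, hV⟩ := ((hS.prod hE).image fun p : ℂ × ℂ => ‖p.1 + p.2⁻¹‖)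
    |>.exists_pos_forall_dist_lt_imp_eq 1
  exact ⟨ρ, hρ, fun β hβ β' hβ' η hη => hV _ ⟨(β, η), ⟨hβ, Set.mem_biUnion hβ' hη⟩, rfl⟩⟩

theorem not_tendsto_nhds_zero_of_eventually_le_succ {d : ℕ → ℝ}
    (hmono : ∀ᶠ n in atTop, d n ≤ d (n + 1)) (hpos : ∃ᶠ n in atTop, 0 < d n) :
    ¬ Tendsto d atTop (𝓝 0) := by
  intro hd
  obtain ⟨M, hM⟩ := eventually_atTop.1 hmono
  obtain ⟨N, hMN, hN⟩ := frequently_atTop.1 hpos M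
  have hle : ∀ n ≥ N, d N ≤ d n := fun n hn => by
    induction n, hn using Nat.le_induction with
    | base => exact le_rfl
    | succ n hn ih => exact ih.trans (hM n (hMN.trans hn))
  exact (ge_of_tendsto hd (eventually_atTop.2 ⟨N, hle⟩)).not_gt hN

theorem not_tendsto_norm_nhds_one {Γ : Subring ℂ} [DiscreteTopology Γ] {x b : ℕ → ℂ}
    (hb : ∀ n, b n ∈ Γ) (hx : ∀ n, 1 < ‖x n‖) (hrec : ∀ n, x (n + 1) = (x n - b n)⁻¹) :
    ¬ Tendsto (fun n => ‖x n‖) atTop (𝓝 1) := by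
  intro hlim
  have hxb : ∀ n, x n - b n = (x (n + 1))⁻¹ := fun n => by rw [hrec, inv_inv]
  have hb0 : ∀ n, b n ≠ 0 := fun n h0 => by
    have h := hx (n + 1)
    rw [hrec, h0, sub_zero, norm_inv, one_lt_inv_iff₀] at h
    exact (hx n).not_gt h.2
  have hlim' : Tendsto (fun n => ‖x n - b n‖) atTop (𝓝 1) := by
    simpa [hxb, norm_inv] using (hlim.comp (tendsto_add_atTop_nat 1)).inv₀ one_ne_zero
  have hb3 : ∀ᶠ n in atTop, ‖b n‖ ≤ 3 := by
    filter_upwards [(hlim.add hlim').eventually (ge_mem_nhds (by norm_num : (1 : ℝ) + 1 < 3))]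
      with n hn
    calc ‖b n‖ = ‖x n - (x n - b n)‖ := by rw [sub_sub_cancel]
      _ ≤ ‖x n‖ + ‖x n - b n‖ := norm_sub_le _ _
      _ ≤ 3 := hn
  obtain ⟨ρ, hρ, hV⟩ := exists_pos_norm_add_inv_eq_one_of_dist_lt Γ 3
  have hbS : ∀ᶠ n in atTop, b n ∈ (closedBall 0 3 ∩ Γ) \ {0} :=
    hb3.mono fun n hn => ⟨⟨mem_closedBall_zero_iff.2 hn, hb n⟩, hb0 n⟩
  set d : ℕ → ℝ := fun n => infDist (x n) (sphere 0 1 ∩ sphere (b n) 1)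
  have hnear := fun δ (hδ : 0 < δ) =>
    eventually_exists_mem_sphere_inter_dist_lt hb hlim hlim' hb3 hδ
  have hd : Tendsto d atTop (𝓝 0) :=
    tendsto_order.2 ⟨fun a ha => Eventually.of_forall fun n => ha.trans_le infDist_nonneg,
      fun ε hε => (hnear ε hε).mono fun n ⟨ξ, hξ, h⟩ => (infDist_le_dist_of_mem hξ).trans_lt h⟩
  refine not_tendsto_nhds_zero_of_eventually_le_succ ?_ ?_ hd
  · filter_upwards [hbS, (tendsto_add_atTop_nat 1).eventually hbS,
      (tendsto_add_atTop_nat 1).eventually (hnear 1 one_pos),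
      hd.eventually (gt_mem_nhds (half_pos hρ)),
      hlim.eventually (gt_mem_nhds (by linarith : (1 : ℝ) < 1 + ρ / 2))]
      with n hbn hbn1 hne hdn hxn
    obtain ⟨η₀, hη₀, -⟩ := hne
    exact infDist_sphere_inter_le_of_sub_eq_inv (hxb n) (hx n).le hxn (hx (n + 1)).le
      (hV _ hbn _ hbn1) ⟨η₀, hη₀⟩ hdn
  · refine ((hnear 1 one_pos).mono fun n ⟨η, hη, _⟩ => ?_).frequently
    refine (sub_pos.2 (hx n)).trans_le ((le_infDist ⟨η, hη⟩).2 fun ξ hξ => ?_)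
    rw [← mem_sphere_zero_iff_norm.1 hξ.1, dist_eq_norm]
    exact norm_sub_norm_le _ _

theorem IsQPair.denom_mem {Γ : Subring ℂ} {a p q : ℕ → ℂ} (hpq : IsQPair a p q)
    (ha : ∀ n, a n ∈ Γ) (n : ℕ) : q n ∈ Γ := by
  obtain ⟨-, -, -, hq0, hq1, hq⟩ := hpq
  induction n using Nat.twoStepInduction with
  | zero => exact hq0 ▸ zero_mem Γ
  | one => exact hq1 ▸ one_mem Γ
  | more n h0 h1 => exact (hq n).symm ▸ add_mem (mul_mem (ha _) h1) h0

namespace IsCFE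

variable {Γ : Subring ℂ} {z : ℂ} {a zs : ℕ → ℂ}

theorem norm_succ_eq (hcf : IsCFE Γ z a zs) (n : ℕ) : ‖zs (n + 1)‖ = ‖zs n - a n‖⁻¹ := by
  rw [hcf.2.2.2 n, norm_inv]

theorem inv_lt_norm_succ {r : ℝ} (hcf : IsCFE Γ z a zs) (hr : ∀ n, ‖zs n - a n‖ < r) (n : ℕ) :
    r⁻¹ < ‖zs (n + 1)‖ :=
  hcf.norm_succ_eq n ▸ inv_strictAnti₀ (hcf.2.2.1 n).1 (hr n)

theorem exists_frequently_le_norm_succ [DiscreteTopology Γ] (hcf : IsCFE Γ z a zs) :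
    ∃ α, 1 < α ∧ ∃ᶠ n in atTop, α ≤ ‖zs (n + 1)‖ := by
  have hx : ∀ n, 1 < ‖zs (n + 1)‖ := by simpa using hcf.inv_lt_norm_succ fun n => (hcf.2.2.1 n).2
  by_contra! h
  refine not_tendsto_norm_nhds_one (fun n => hcf.1 (n + 1)) hx (fun n => hcf.2.2.2 (n + 1)) ?_
  exact tendsto_order.2 ⟨fun c hc => Eventually.of_forall fun n => hc.trans (hx n),
    fun c hc => (h c hc).mono fun _ => id⟩

end IsCFE

theorem isNeat_iff {zs q : ℕ → ℂ} {N : Set ℕ} :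
    IsNeat zs q N ↔ (∀ n ∈ N, ‖q n‖ ≤ ‖q (n + 1)‖) ∧
      ∃ α, 1 < α ∧ ∀ᶠ n in atTop, n ∈ N → α ≤ ‖zs (n + 1)‖ := by
  simp only [IsNeat, ← Nat.cofinite_eq_atTop, eventually_cofinite, Classical.not_imp, not_le]

theorem stmt_4_general (Γ : Subring ℂ) (hdisc : DiscreteTopology Γ)
    (z : ℂ) (a zs p q : ℕ → ℂ) (hcf : IsCFE Γ z a zs) (hpq : IsQPair a p q) :
    (((∀ n : ℕ, Norm.norm (q n) ≤ Norm.norm (q (n + 1)))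
        ∨ (∃ α : ℝ, 1 < α ∧ ∀ᶠ n in Filter.atTop, α ≤ Norm.norm (zs (n + 1)))
        ∨ (∃ f : ℂ → ℂ, (∀ ζ : ℂ, f ζ ∈ Γ) ∧ (∀ n, a n = f (zs n)) ∧
            ∃ r : ℝ, 0 < r ∧ r < 1 ∧ ∀ ζ : ℂ, Norm.norm (ζ - f ζ) < r))
      → ∃ N : Set ℕ, N.Infinite ∧ IsNeat zs q N)
    ∧ (((∀ n : ℕ, Norm.norm (q n) ≤ Norm.norm (q (n + 1)))
        ∧ (∃ f : ℂ → ℂ, (∀ ζ : ℂ, f ζ ∈ Γ) ∧ (∀ n, a n = f (zs n)) ∧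
            ∃ r : ℝ, 0 < r ∧ r < 1 ∧ ∀ ζ : ℂ, Norm.norm (ζ - f ζ) < r))
      → IsNeat zs q Set.univ) := by
  have hN : {n | ‖q n‖ ≤ ‖q (n + 1)‖}.Infinite :=
    infinite_setOf_norm_le_norm_succ (hpq.denom_mem hcf.1)
  have halg : ∀ f : ℂ → ℂ, (∀ n, a n = f (zs n)) → ∀ r, 0 < r → r < 1 →
      (∀ ζ, ‖ζ - f ζ‖ < r) → ∃ α, 1 < α ∧ ∀ n, α ≤ ‖zs (n + 1)‖ :=
    fun f hfa r hr0 hr1 hfr => ⟨r⁻¹, one_lt_inv₀ hr0 |>.2 hr1,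
      fun n => (hcf.inv_lt_norm_succ (fun n => hfa n ▸ hfr (zs n)) n).le⟩
  refine ⟨?_, ?_⟩
  · rintro (hq | ⟨α, hα, hev⟩ | ⟨f, -, hfa, r, hr0, hr1, hfr⟩)
    · obtain ⟨α, hα, hfreq⟩ := hcf.exists_frequently_le_norm_succ
      exact ⟨_, Nat.frequently_atTop_iff_infinite.1 hfreq,
        isNeat_iff.2 ⟨fun n _ => hq n, α, hα, Eventually.of_forall fun _ => id⟩⟩
    · exact ⟨_, hN, isNeat_iff.2 ⟨fun _ => id, α, hα, hev.mono fun _ h _ => h⟩⟩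
    · obtain ⟨α, hα, hle⟩ := halg f hfa r hr0 hr1 hfr
      exact ⟨_, hN, isNeat_iff.2 ⟨fun _ => id, α, hα, Eventually.of_forall fun n _ => hle n⟩⟩
  · rintro ⟨hq, f, -, hfa, r, hr0, hr1, hfr⟩
    obtain ⟨α, hα, hle⟩ := halg f hfa r hr0 hr1 hfr
    exact isNeat_iff.2 ⟨fun n _ => hq n, α, hα, Eventually.of_forall fun n _ => hle n⟩

/-- Proposition 2.7: existence of an infinite neat subset under any of the conditions
(i) `|q_{n-1}| ≤ |q_n|` for all `n`; (ii) `liminf |z_{n+1}| > 1`; (iii) the expansion is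
given by an algorithm `f` with `|ζ - f ζ| < r` for all `ζ`, for some `r ∈ (0,1)`.
Moreover if (i) and (iii) both hold then all of `ℕ` is a neat subset. -/
theorem stmt_4 (Γ : Subring ℂ) (hdisc : DiscreteTopology Γ)
    (z : ℂ) (hz : z ∉ quotField Γ)
    (a zs p q : ℕ → ℂ) (hcf : IsCFE Γ z a zs) (hpq : IsQPair a p q) :
    (((∀ n : ℕ, Norm.norm (q n) ≤ Norm.norm (q (n + 1)))
        ∨ (∃ α : ℝ, 1 < α ∧ ∀ᶠ n in Filter.atTop, α ≤ Norm.norm (zs (n + 1)))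
        ∨ (∃ f : ℂ → ℂ, (∀ ζ : ℂ, f ζ ∈ Γ) ∧ (∀ n, a n = f (zs n)) ∧
            ∃ r : ℝ, 0 < r ∧ r < 1 ∧ ∀ ζ : ℂ, Norm.norm (ζ - f ζ) < r))
      → ∃ N : Set ℕ, N.Infinite ∧ IsNeat zs q N)
    ∧ (((∀ n : ℕ, Norm.norm (q n) ≤ Norm.norm (q (n + 1)))
        ∧ (∃ f : ℂ → ℂ, (∀ ζ : ℂ, f ζ ∈ Γ) ∧ (∀ n, a n = f (zs n)) ∧
            ∃ r : ℝ, 0 < r ∧ r < 1 ∧ ∀ ζ : ℂ, Norm.norm (ζ - f ζ) < r))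
      → IsNeat zs q Set.univ) :=
  stmt_4_general Γ hdisc z a zs p q hcf hpq
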